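/- arXiv:0801.0278 — 2 statements merged into one kernel-verified Lean document; each statement's English description precedes it below -/
import Mathlib

section
/- Let {Q_i}_{i=1}^{n+1} be n+1 pairwise disjoint nonempty subsets of V, Q* the complement of their union, and for each pair j < k set T_{j,k} := (1/n)( ∂(Q_j ∪ Q_k)/π(Q_j ∪ Q_k) + ∑_{i≠j,k} ∂(Q_i)/π(Q_i) ). Then min_{j<k} T_{j,k} ≤ ∂(Q*)/(n²(1−π(Q*))) + ((n−1)/n²) ∑_{i=1}^{n+1} ∂(Q_i)/π(Q_i), provided π(Q*) < 1. -/
open Finset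

/-! Weight each pair `j ≠ k` by `π(Q_j) + π(Q_k)`. Since `Q_j` and `Q_k` are disjoint, this weight
times `∂(Q_j ∪ Q_k)/π(Q_j ∪ Q_k)` is `∂(Q_j) + ∂(Q_k)` minus the flows between `Q_j` and `Q_k`, so
the weighted sum of the `n T_{j,k}` only involves the `π(Q_i)`, the ratios `∂(Q_i)/π(Q_i)` and the
flows between distinct `Q_i`. Those flows add up to `∑ ∂(Q_i) - ∂(⋃ Q_i)`, and
`∂(⋃ Q_i) = ∂(Q*)` by stationarity; the weighted sum is then exactly the total weight
`2n(1 - π(Q*))` times the right-hand side, and some `T_{j,k}` is at most this weighted average. -/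

/-- Outgoing boundary flow `∂(Q) = ∑_{u∈Q, v∉Q} K(u,v)π(u)`. -/
noncomputable def dpart {V : Type*} [Fintype V] [DecidableEq V]
    (K : V → V → ℝ) (π : V → ℝ) (Q : Finset V) : ℝ :=
  ∑ u ∈ Q, ∑ v ∈ Qᶜ, K u v * π u

/-- `π(Q) = ∑_{u∈Q} π(u)`. -/
noncomputable def pim {V : Type*} (π : V → ℝ) (Q : Finset V) : ℝ :=
  ∑ u ∈ Q, π u

section PairSums

variable {ι : Type*} (s : Finset ι)

theorem sum_product_eq_sum_diag_add_sum_offDiag {M : Type*} [AddCommMonoid M] (f : ι × ι → M) :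
    ∑ p ∈ s ×ˢ s, f p = ∑ i ∈ s, f (i, i) + ∑ p ∈ s.offDiag, f p := by
  classical
  rw [← diag_union_offDiag, sum_union (disjoint_diag_offDiag s), diag, sum_map]
  rfl

theorem sum_offDiag_swap {M : Type*} [AddCommMonoid M] (f : ι × ι → M) :
    ∑ p ∈ s.offDiag, f p.swap = ∑ p ∈ s.offDiag, f p :=
  sum_nbij' Prod.swap Prod.swap (by simp [mem_offDiag, and_left_comm, ne_comm])
    (by simp [mem_offDiag, and_left_comm, ne_comm])
    (by simp) (by simp) (by simp)

theorem sum_offDiag_mul {R : Type*} [CommRing R] (f g : ι → R) :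
    ∑ p ∈ s.offDiag, f p.1 * g p.2 = (∑ i ∈ s, f i) * ∑ i ∈ s, g i - ∑ i ∈ s, f i * g i := by
  rw [eq_sub_iff_add_eq', sum_mul_sum, ← sum_product',
    sum_product_eq_sum_diag_add_sum_offDiag s (fun p => f p.1 * g p.2)]

theorem sum_offDiag_add {R : Type*} [CommRing R] (f : ι → R) :
    ∑ p ∈ s.offDiag, (f p.1 + f p.2) = 2 * ((#s : R) - 1) * ∑ i ∈ s, f i := by
  have h := sum_offDiag_mul s f 1
  have h' := sum_offDiag_mul s 1 f
  simp only [Pi.one_apply, mul_one, one_mul, sum_const, nsmul_eq_mul, mul_one] at h h'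
  rw [sum_add_distrib, h, h']
  ring

theorem sum_offDiag_pair_expansion {R : Type*} [CommRing R] (w r : ι → R) (F : ι → ι → R) :
    ∑ p ∈ s.offDiag, ((w p.1 + w p.2) * ∑ i ∈ s, r i - (F p.1 p.2 + F p.2 p.1)
        - (w p.1 * r p.2 + w p.2 * r p.1))
      = 2 * (((#s : R) - 2) * (∑ i ∈ s, w i) * (∑ i ∈ s, r i)
        + (∑ i ∈ s, w i * r i - ∑ p ∈ s.offDiag, F p.1 p.2)) := by
  have hF := sum_offDiag_swap s (fun p => F p.1 p.2)
  have hwr := sum_offDiag_mul s r w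
  simp only [Prod.fst_swap, Prod.snd_swap] at hF
  simp only [mul_comm (r _) (w _)] at hwr
  rw [sum_sub_distrib, sum_sub_distrib, ← sum_mul, sum_offDiag_add, sum_add_distrib,
    sum_add_distrib, hF, sum_offDiag_mul, hwr]
  ring

end PairSums

theorem exists_le_of_sum_mul_le {α R : Type*} [CommRing R] [LinearOrder R] [IsStrictOrderedRing R]
    {s : Finset α} (hs : s.Nonempty) {w f : α → R} (hw : ∀ p ∈ s, 0 < w p) (c : R)
    (h : ∑ p ∈ s, w p * f p ≤ ∑ p ∈ s, w p * c) :
    ∃ p ∈ s, f p ≤ c := by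
  obtain ⟨p, hp, hle⟩ := exists_le_of_sum_le hs h
  exact ⟨p, hp, le_of_mul_le_mul_left hle (hw p hp)⟩

section Flow

variable {V : Type*} (K : V → V → ℝ) (π : V → ℝ)

noncomputable def flow (A B : Finset V) : ℝ := ∑ u ∈ A, ∑ v ∈ B, K u v * π u

theorem pim_pos (hπ : ∀ u, 0 < π u) {A : Finset V} (hA : A.Nonempty) : 0 < pim π A :=
  sum_pos (fun u _ => hπ u) hA

theorem pim_union [DecidableEq V] {A B : Finset V} (h : Disjoint A B) :
    pim π (A ∪ B) = pim π A + pim π B :=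
  sum_union h

theorem pim_biUnion [DecidableEq V] {ι : Type*} {s : Finset ι} {Q : ι → Finset V}
    (h : (s : Set ι).PairwiseDisjoint Q) : pim π (s.biUnion Q) = ∑ i ∈ s, pim π (Q i) :=
  sum_biUnion h

theorem pim_compl [Fintype V] [DecidableEq V] (hπ1 : ∑ u, π u = 1) (A : Finset V) :
    pim π Aᶜ = 1 - pim π A := by
  rw [← hπ1, ← sum_compl_add_sum A, pim, pim, add_sub_cancel_right]

theorem flow_univ_right [Fintype V] (hK1 : ∀ u, ∑ v, K u v = 1) (A : Finset V) :
    flow K π A univ = pim π A := by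
  simp only [flow, pim, ← sum_mul, hK1, one_mul]

theorem flow_univ_left [Fintype V] (hstat : ∀ v, ∑ u, π u * K u v = π v) (B : Finset V) :
    flow K π univ B = pim π B := by
  rw [flow, sum_comm]
  simp only [mul_comm (K _ _), hstat]
  rfl

variable [DecidableEq V]

theorem flow_union_left {A B : Finset V} (h : Disjoint A B) (C : Finset V) :
    flow K π (A ∪ B) C = flow K π A C + flow K π B C :=
  sum_union h

theorem flow_union_right {A B : Finset V} (h : Disjoint A B) (C : Finset V) :
    flow K π C (A ∪ B) = flow K π C A + flow K π C B := by
  simp only [flow, sum_union h, sum_add_distrib]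

theorem flow_biUnion_left {ι : Type*} {s : Finset ι} {Q : ι → Finset V}
    (h : (s : Set ι).PairwiseDisjoint Q) (C : Finset V) :
    flow K π (s.biUnion Q) C = ∑ i ∈ s, flow K π (Q i) C :=
  sum_biUnion h

theorem flow_biUnion_right {ι : Type*} {s : Finset ι} {Q : ι → Finset V}
    (h : (s : Set ι).PairwiseDisjoint Q) (C : Finset V) :
    flow K π C (s.biUnion Q) = ∑ i ∈ s, flow K π C (Q i) := by
  simp only [flow, sum_biUnion h]
  exact sum_comm

variable [Fintype V]

theorem flow_compl_left (A B : Finset V) :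
    flow K π Aᶜ B = flow K π univ B - flow K π A B := by
  rw [eq_sub_iff_add_eq, flow, flow, flow, sum_compl_add_sum]

theorem flow_compl_right (A B : Finset V) :
    flow K π A Bᶜ = flow K π A univ - flow K π A B := by
  simp only [flow, ← sum_sub_distrib, ← sum_compl_add_sum B, add_sub_cancel_right]

theorem dpart_eq_flow_compl (A : Finset V) : dpart K π A = flow K π A Aᶜ := rfl

theorem dpart_eq_pim_sub_flow (hK1 : ∀ u, ∑ v, K u v = 1) (A : Finset V) :
    dpart K π A = pim π A - flow K π A A := by
  rw [dpart_eq_flow_compl, flow_compl_right, flow_univ_right K π hK1]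

theorem dpart_compl (hK1 : ∀ u, ∑ v, K u v = 1) (hstat : ∀ v, ∑ u, π u * K u v = π v)
    (A : Finset V) : dpart K π Aᶜ = dpart K π A := by
  rw [dpart_eq_flow_compl, compl_compl, flow_compl_left, flow_univ_left K π hstat,
    dpart_eq_pim_sub_flow K π hK1]

theorem dpart_union (hK1 : ∀ u, ∑ v, K u v = 1) {A B : Finset V} (h : Disjoint A B) :
    dpart K π (A ∪ B) = dpart K π A + dpart K π B - (flow K π A B + flow K π B A) := by
  simp only [dpart_eq_pim_sub_flow K π hK1, pim_union π h, flow_union_left K π h,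
    flow_union_right K π h]
  ring

theorem dpart_biUnion (hK1 : ∀ u, ∑ v, K u v = 1) {ι : Type*} {s : Finset ι}
    {Q : ι → Finset V} (h : (s : Set ι).PairwiseDisjoint Q) :
    dpart K π (s.biUnion Q)
      = ∑ i ∈ s, dpart K π (Q i) - ∑ p ∈ s.offDiag, flow K π (Q p.1) (Q p.2) := by
  have hflow : flow K π (s.biUnion Q) (s.biUnion Q)
      = ∑ i ∈ s, flow K π (Q i) (Q i) + ∑ p ∈ s.offDiag, flow K π (Q p.1) (Q p.2) := by
    simp only [flow_biUnion_left K π h, flow_biUnion_right K π h]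
    rw [← sum_product',
      sum_product_eq_sum_diag_add_sum_offDiag s (fun p => flow K π (Q p.1) (Q p.2))]
  simp only [dpart_eq_pim_sub_flow K π hK1, pim_biUnion π h, hflow, sum_sub_distrib]
  ring

end Flow

section Merging

variable {V : Type*} [Fintype V] [DecidableEq V] (K : V → V → ℝ) (π : V → ℝ)

noncomputable def boundaryRatio (A : Finset V) : ℝ := dpart K π A / pim π A

theorem pim_mul_boundaryRatio {A : Finset V} (hA : pim π A ≠ 0) :
    pim π A * boundaryRatio K π A = dpart K π A :=
  mul_div_cancel₀ _ hA

variable {ι : Type*} [Fintype ι] [DecidableEq ι] (Q : ι → Finset V)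

/-- `n T_{j,k}`: the sum of the boundary ratios of the family with `Q j` and `Q k` merged. -/
noncomputable def mergedRatioSum (j k : ι) : ℝ :=
  boundaryRatio K π (Q j ∪ Q k) + ∑ i ∈ (univ.erase j).erase k, boundaryRatio K π (Q i)

theorem pim_add_mul_mergedRatioSum (hK1 : ∀ u, ∑ v, K u v = 1) {j k : ι} (hjk : j ≠ k)
    (hdisj : Disjoint (Q j) (Q k)) (hj : 0 < pim π (Q j)) (hk : 0 < pim π (Q k)) :
    (pim π (Q j) + pim π (Q k)) * mergedRatioSum K π Q j k
      = (pim π (Q j) + pim π (Q k)) * ∑ i, boundaryRatio K π (Q i)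
        - (flow K π (Q j) (Q k) + flow K π (Q k) (Q j))
        - (pim π (Q j) * boundaryRatio K π (Q k) + pim π (Q k) * boundaryRatio K π (Q j)) := by
  have hunion : (pim π (Q j) + pim π (Q k)) * boundaryRatio K π (Q j ∪ Q k)
      = dpart K π (Q j) + dpart K π (Q k) - (flow K π (Q j) (Q k) + flow K π (Q k) (Q j)) := by
    rw [← pim_union π hdisj, pim_mul_boundaryRatio K π (by rw [pim_union π hdisj]; positivity),
      dpart_union K π hK1 hdisj]
  have herase : ∑ i ∈ (univ.erase j).erase k, boundaryRatio K π (Q i)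
      = ∑ i, boundaryRatio K π (Q i) - boundaryRatio K π (Q j) - boundaryRatio K π (Q k) := by
    rw [sum_erase_eq_sub (mem_erase.2 ⟨hjk.symm, mem_univ k⟩), sum_erase_eq_sub (mem_univ j)]
  rw [mergedRatioSum, mul_add, hunion, herase, ← pim_mul_boundaryRatio K π hj.ne',
    ← pim_mul_boundaryRatio K π hk.ne']
  ring

theorem sum_offDiag_mul_mergedRatioSum (hK1 : ∀ u, ∑ v, K u v = 1)
    (hstat : ∀ v, ∑ u, π u * K u v = π v) (hπ : ∀ u, 0 < π u) (hQne : ∀ i, (Q i).Nonempty)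
    (hQdisj : Pairwise (Function.onFun Disjoint Q)) :
    ∑ p ∈ univ.offDiag, (pim π (Q p.1) + pim π (Q p.2)) * mergedRatioSum K π Q p.1 p.2
      = 2 * (((Fintype.card ι : ℝ) - 2) * pim π (univ.biUnion Q) * ∑ i, boundaryRatio K π (Q i)
        + dpart K π (univ.biUnion Q)ᶜ) := by
  have hw : ∀ i, 0 < pim π (Q i) := fun i => pim_pos π hπ (hQne i)
  have hdisj : ((univ : Finset ι) : Set ι).PairwiseDisjoint Q := fun i _ j _ hij => hQdisj hij
  rw [sum_congr rfl fun p hp => pim_add_mul_mergedRatioSum K π Q hK1 (mem_offDiag.1 hp).2.2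
      (hQdisj (mem_offDiag.1 hp).2.2) (hw p.1) (hw p.2),
    sum_offDiag_pair_expansion univ (fun i => pim π (Q i)) (fun i => boundaryRatio K π (Q i))
      (fun j k => flow K π (Q j) (Q k)),
    dpart_compl K π hK1 hstat, dpart_biUnion K π hK1 hdisj, pim_biUnion π hdisj, card_univ]
  simp only [pim_mul_boundaryRatio K π (hw _).ne']

end Merging

theorem min_Tjk_bound_general {V : Type*} [Fintype V] [DecidableEq V]
    (K : V → V → ℝ) (π : V → ℝ)
    (hK1 : ∀ u, ∑ v, K u v = 1)
    (hπ : ∀ u, 0 < π u) (hπ1 : ∑ u, π u = 1)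
    (hstat : ∀ v, ∑ u, π u * K u v = π v)
    (n : ℕ) (hn : 0 < n) (Q : Fin (n + 1) → Finset V)
    (hQne : ∀ i, (Q i).Nonempty)
    (hQdisj : Pairwise (Function.onFun Disjoint Q))
    (Qs : Finset V) (hQs : Qs = (Finset.univ.biUnion Q)ᶜ)
    (hQs1 : pim π Qs < 1)
    (T : Fin (n + 1) → Fin (n + 1) → ℝ)
    (hT : ∀ j k, j ≠ k → T j k = (1 / (n : ℝ)) *
      (dpart K π (Q j ∪ Q k) / pim π (Q j ∪ Q k)
        + ∑ i ∈ (Finset.univ.erase j).erase k, dpart K π (Q i) / pim π (Q i))) :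
    ∃ j k, j ≠ k ∧ T j k ≤
      dpart K π Qs / ((n : ℝ) ^ 2 * (1 - pim π Qs))
        + (((n : ℝ) - 1) / (n : ℝ) ^ 2) * ∑ i, dpart K π (Q i) / pim π (Q i) := by
  have hw : ∀ i, 0 < pim π (Q i) := fun i => pim_pos π hπ (hQne i)
  have hdisj : ((univ : Finset (Fin (n + 1))) : Set (Fin (n + 1))).PairwiseDisjoint Q :=
    fun i _ j _ hij => hQdisj hij
  have hU : 1 - pim π Qs = pim π (univ.biUnion Q) := by
    rw [hQs, pim_compl π hπ1, sub_sub_cancel]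
  have hUpos : pim π (univ.biUnion Q) ≠ 0 := by linarith
  have hn' : (n : ℝ) ≠ 0 := by positivity
  have hTm : ∀ j k, j ≠ k → T j k = 1 / n * mergedRatioSum K π Q j k := hT
  have hsum : ∑ p ∈ univ.offDiag, (pim π (Q p.1) + pim π (Q p.2)) * T p.1 p.2
      = ∑ p ∈ univ.offDiag, (pim π (Q p.1) + pim π (Q p.2)) * (dpart K π Qs / ((n : ℝ) ^ 2
        * (1 - pim π Qs)) + (((n : ℝ) - 1) / (n : ℝ) ^ 2) * ∑ i, boundaryRatio K π (Q i)) := by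
    rw [sum_congr rfl fun p hp => by rw [hTm p.1 p.2 (mem_offDiag.1 hp).2.2, mul_left_comm],
      ← mul_sum, sum_offDiag_mul_mergedRatioSum K π Q hK1 hstat hπ hQne hQdisj, ← sum_mul,
      sum_offDiag_add univ (fun i => pim π (Q i)), ← pim_biUnion π hdisj, hU, ← hQs, card_univ,
      Fintype.card_fin]
    push_cast
    field_simp
    ring
  obtain ⟨⟨j, k⟩, hp, hle⟩ := exists_le_of_sum_mul_le
    ⟨(0, Fin.last n), by simp [mem_offDiag, Fin.ext_iff]; omega⟩
    (fun p _ => add_pos (hw p.1) (hw p.2)) _ hsum.le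
  exact ⟨j, k, (mem_offDiag.1 hp).2.2, hle⟩

theorem min_Tjk_bound {V : Type*} [Fintype V] [DecidableEq V]
    (K : V → V → ℝ) (π : V → ℝ)
    (hK0 : ∀ u v, 0 ≤ K u v) (hK1 : ∀ u, ∑ v, K u v = 1)
    (hπ : ∀ u, 0 < π u) (hπ1 : ∑ u, π u = 1)
    (hstat : ∀ v, ∑ u, π u * K u v = π v)
    (n : ℕ) (hn : 0 < n) (Q : Fin (n + 1) → Finset V)
    (hQne : ∀ i, (Q i).Nonempty)
    (hQdisj : Pairwise (Function.onFun Disjoint Q))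
    (Qs : Finset V) (hQs : Qs = (Finset.univ.biUnion Q)ᶜ)
    (hQs1 : pim π Qs < 1)
    (T : Fin (n + 1) → Fin (n + 1) → ℝ)
    (hT : ∀ j k, j ≠ k → T j k = (1 / (n : ℝ)) *
      (dpart K π (Q j ∪ Q k) / pim π (Q j ∪ Q k)
        + ∑ i ∈ (Finset.univ.erase j).erase k, dpart K π (Q i) / pim π (Q i))) :
    ∃ j k, j ≠ k ∧ T j k ≤
      dpart K π Qs / ((n : ℝ) ^ 2 * (1 - pim π Qs))
        + (((n : ℝ) - 1) / (n : ℝ) ^ 2) * ∑ i, dpart K π (Q i) / pim π (Q i) :=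
  min_Tjk_bound_general K π hK1 hπ hπ1 hstat n hn Q hQne hQdisj Qs hQs hQs1 T hT
end

section
/- The isoperimetric spectrum is monotone: ι_n ≤ ι_{n+1}, where ι_k is the minimum over families of k pairwise disjoint nonempty subsets {Q_i} of V of (1/k)∑_i ∂(Q_i)/π(Q_i). -/
open Finset

/-- The `n`-th isoperimetric constant: minimum of the mean normalized boundary over
families of `n` pairwise disjoint nonempty subsets of `V`. -/
noncomputable def iotaD {V : Type*} [Fintype V] [DecidableEq V]
    (K : V → V → ℝ) (π : V → ℝ) (n : ℕ) : ℝ :=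
  sInf {x : ℝ | ∃ Q : Fin n → Finset V, (∀ i, (Q i).Nonempty) ∧
    Pairwise (Function.onFun Disjoint Q) ∧
    x = (∑ i, dpart K π (Q i) / pim π (Q i)) / n}

/-- The `n`-th partition isoperimetric constant: minimum of the mean normalized boundary
over partitions of `V` into `n` nonempty parts. -/
noncomputable def iotaP {V : Type*} [Fintype V] [DecidableEq V]
    (K : V → V → ℝ) (π : V → ℝ) (n : ℕ) : ℝ :=
  sInf {x : ℝ | ∃ Q : Fin n → Finset V, (∀ i, (Q i).Nonempty) ∧
    Pairwise (Function.onFun Disjoint Q) ∧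
    Finset.univ.biUnion Q = Finset.univ ∧
    x = (∑ i, dpart K π (Q i) / pim π (Q i)) / n}

/-!
Given `n + 1` disjoint nonempty sets, discard the one with the largest ratio `∂(Q) / π(Q)`:
the remaining `n` sets compete for `ι_n`, and removing a largest term does not raise a mean.
-/

open Function

theorem Fin.exists_mean_succAbove_le {n : ℕ} (hn : 0 < n) (r : Fin (n + 1) → ℝ) :
    ∃ i : Fin (n + 1), (∑ j, r (i.succAbove j)) / n ≤ (∑ j, r j) / ((n + 1 : ℕ) : ℝ) := by
  obtain ⟨i, -, hmax⟩ := exists_max_image univ r univ_nonempty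
  refine ⟨i, ?_⟩
  have hrest : ∑ j, r (i.succAbove j) ≤ n * r i := by
    calc ∑ j, r (i.succAbove j) ≤ ∑ _j : Fin n, r i := sum_le_sum fun j _ => hmax _ (mem_univ _)
      _ = n * r i := by simp
  rw [Fin.sum_univ_succAbove r i, div_le_div_iff₀ (by exact_mod_cast hn) (by positivity)]
  push_cast
  nlinarith

theorem pim_nonneg {V : Type*} {π : V → ℝ} (hπ : ∀ u, 0 ≤ π u) (Q : Finset V) :
    0 ≤ pim π Q :=
  sum_nonneg fun u _ => hπ u

section

variable {V : Type*} [Fintype V] [DecidableEq V] {K : V → V → ℝ} {π : V → ℝ}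

theorem dpart_nonneg (hK0 : ∀ u v, 0 ≤ K u v) (hπ : ∀ u, 0 ≤ π u) (Q : Finset V) :
    0 ≤ dpart K π Q :=
  sum_nonneg fun u _ => sum_nonneg fun v _ => mul_nonneg (hK0 u v) (hπ u)

theorem iotaD_le_mean (hK0 : ∀ u v, 0 ≤ K u v) (hπ : ∀ u, 0 ≤ π u) {n : ℕ}
    (Q : Fin n → Finset V) (hne : ∀ i, (Q i).Nonempty) (hdisj : Pairwise (Disjoint on Q)) :
    iotaD K π n ≤ (∑ i, dpart K π (Q i) / pim π (Q i)) / n := by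
  refine csInf_le ⟨0, ?_⟩ ⟨Q, hne, hdisj, rfl⟩
  rintro _ ⟨Q', -, -, rfl⟩
  exact div_nonneg (sum_nonneg fun i _ =>
    div_nonneg (dpart_nonneg hK0 hπ _) (pim_nonneg hπ _)) n.cast_nonneg

theorem le_iotaD {n : ℕ} (hcard : n ≤ Fintype.card V) {c : ℝ}
    (h : ∀ Q : Fin n → Finset V, (∀ i, (Q i).Nonempty) → Pairwise (Disjoint on Q) →
      c ≤ (∑ i, dpart K π (Q i) / pim π (Q i)) / n) :
    c ≤ iotaD K π n := by
  obtain ⟨e⟩ : Nonempty (Fin n ↪ V) :=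
    Function.Embedding.nonempty_of_card_le (by simpa using hcard)
  refine le_csInf ⟨_, fun i => {e i}, fun i => singleton_nonempty _,
    fun i j hij => disjoint_singleton.2 (e.injective.ne hij), rfl⟩ ?_
  rintro _ ⟨Q, hne, hdisj, rfl⟩
  exact h Q hne hdisj

end

theorem iotaD_monotone_general {V : Type*} [Fintype V] [DecidableEq V]
    (K : V → V → ℝ) (π : V → ℝ)
    (hK0 : ∀ u v, 0 ≤ K u v)
    (hπ : ∀ u, 0 < π u)
    (n : ℕ) (hn : 0 < n) (hcard : n + 1 ≤ Fintype.card V) :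
    iotaD K π n ≤ iotaD K π (n + 1) := by
  refine le_iotaD hcard fun Q hne hdisj => ?_
  obtain ⟨i, hi⟩ := Fin.exists_mean_succAbove_le hn fun j => dpart K π (Q j) / pim π (Q j)
  refine le_trans ?_ hi
  exact iotaD_le_mean hK0 (fun u => (hπ u).le) (fun j => Q (i.succAbove j)) (fun j => hne _)
    fun j k hjk => hdisj (Fin.succAbove_right_injective.ne hjk)

theorem iotaD_monotone {V : Type*} [Fintype V] [DecidableEq V]
    (K : V → V → ℝ) (π : V → ℝ)
    (hK0 : ∀ u v, 0 ≤ K u v) (hK1 : ∀ u, ∑ v, K u v = 1)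
    (hπ : ∀ u, 0 < π u) (hπ1 : ∑ u, π u = 1)
    (hstat : ∀ v, ∑ u, π u * K u v = π v)
    (n : ℕ) (hn : 0 < n) (hcard : n + 1 ≤ Fintype.card V) :
    iotaD K π n ≤ iotaD K π (n + 1) :=
  iotaD_monotone_general K π hK0 hπ n hn hcard
end
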